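/- Let (X, f) be a FAD-system with fixed point count f_n = #Fix(f^n) and exponential entropy Λ. Then the radius of convergence of the complex power series ζ_f(z) = exp(∑_{n≥1} f_n z^n / n) is equal to 1/Λ. -/

import Mathlib

open scoped BigOperators
open Filter

/-- The `p`-adic absolute value of the natural number `n`, normalised by `|p|ₚ = 1/p`. -/
noncomputable def padicAbs (p n : ℕ) : ℝ := ((p : ℝ) ^ padicValNat p n)⁻¹

/-- A gcd sequence: `x n = x (gcd n d)` for some `d ≥ 1` and all `n ≥ 1`. -/
def IsGcdSeq {α : Type*} (x : ℕ → α) : Prop :=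
  ∃ d : ℕ, 1 ≤ d ∧ ∀ n : ℕ, 1 ≤ n → x n = x (Nat.gcd n d)

/-- A gcd sequence with a period coprime to `p`. -/
def IsGcdSeqCoprime {α : Type*} (x : ℕ → α) (p : ℕ) : Prop :=
  ∃ d : ℕ, 1 ≤ d ∧ Nat.Coprime d p ∧ ∀ n : ℕ, 1 ≤ n → x n = x (Nat.gcd n d)

/-- No complex eigenvalue of the integer matrix `A` is a root of unity. -/
def NoRootOfUnityEigenvalue {k : ℕ} (A : Matrix (Fin k) (Fin k) ℤ) : Prop :=
  ∀ ξ : ℂ, ((A.map (Int.cast : ℤ → ℂ)).charpoly).IsRoot ξ → ∀ m : ℕ, 1 ≤ m → ξ ^ m ≠ 1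

/-- The non-linear-recurrent factor `r n * ∏_{p ∈ S} |n|ₚ^{s p n} p^{-t p n · |n|ₚ⁻¹}`
of a FAD-sequence. -/
noncomputable def fadFactor (S : Finset ℕ) (r : ℕ → ℝ) (s t : ℕ → ℕ → ℝ) (n : ℕ) : ℝ :=
  r n * ∏ p ∈ S, (padicAbs p n ^ s p n * (p : ℝ) ^ (-(t p n) * (padicAbs p n)⁻¹))

/-- `a` is a FAD-sequence with data `(A, S, c, r, s, t)`. -/
def IsFADWith (a : ℕ → ℤ) {k : ℕ} (A : Matrix (Fin k) (Fin k) ℤ)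
    (S : Finset ℕ) (c : ℝ) (r : ℕ → ℝ) (s t : ℕ → ℕ → ℝ) : Prop :=
  NoRootOfUnityEigenvalue A ∧
  (∀ p ∈ S, Nat.Prime p) ∧
  0 < c ∧
  IsGcdSeq r ∧ (∀ n : ℕ, 1 ≤ n → 0 < r n) ∧
  (∀ p ∈ S, IsGcdSeqCoprime (s p) p ∧ ∀ n : ℕ, 1 ≤ n → 0 ≤ s p n) ∧
  (∀ p ∈ S, IsGcdSeqCoprime (t p) p ∧ ∀ n : ℕ, 1 ≤ n → 0 ≤ t p n) ∧
  ∀ n : ℕ, 1 ≤ n →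
    (a n : ℝ) = |((A ^ n - 1).det : ℝ)| * c ^ n * fadFactor S r s t n

/-- The number of fixed points of the `n`-th iterate of `f`, as an integer. -/
noncomputable def fixCount {X : Type*} (f : X → X) (n : ℕ) : ℤ :=
  (Nat.card (Function.fixedPoints (f^[n])) : ℤ)

/-- The exponential entropy `Λ = c · ∏_{|ξᵢ| > 1} |ξᵢ|` of a FAD-system with data `(A, …, c, …)`,
the product running over the complex eigenvalues of `A` with multiplicity. -/
noncomputable def expEntropy {k : ℕ} (A : Matrix (Fin k) (Fin k) ℤ) (c : ℝ) : ℝ :=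
  c * (((A.map (Int.cast : ℤ → ℂ)).charpoly.roots).map fun ξ => max 1 (‖ξ‖)).prod

/-- Hyperbolicity: no complex eigenvalue of `A` has modulus `1`. -/
def Hyperbolic {k : ℕ} (A : Matrix (Fin k) (Fin k) ℤ) : Prop :=
  ∀ ξ ∈ ((A.map (Int.cast : ℤ → ℂ)).charpoly).roots, ‖ξ‖ ≠ 1

/-- The number `P_ℓ` of periodic orbits of `f` of length `ℓ`
(the set of points of minimal period `ℓ` decomposes into orbits of size `ℓ`). -/
noncomputable def orbitCount {X : Type*} (f : X → X) (l : ℕ) : ℕ :=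
  Nat.card {x : X // Function.minimalPeriod f x = l} / l

/-- The orbit-counting function `π_f(N) = ∑_{ℓ ≤ N} P_ℓ`. -/
noncomputable def orbitCountBelow {X : Type*} (f : X → X) (N : ℕ) : ℕ :=
  ∑ l ∈ Finset.Icc 1 N, orbitCount f l

/-- The set of accumulation points of a real sequence: limits of subsequences. -/
def accPoints (g : ℕ → ℝ) : Set ℝ :=
  {x : ℝ | ∃ φ : ℕ → ℕ, StrictMono φ ∧ Filter.Tendsto (fun i => g (φ i)) Filter.atTop (nhds x)}

/-- `(a n)_{n ≥ 1}` satisfies a linear recurrence for all sufficiently large `n`. -/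
def SatisfiesLinearRecurrence (a : ℕ → ℂ) : Prop :=
  ∃ d : ℕ, 1 ≤ d ∧ ∃ β : Fin d → ℂ, ∃ N : ℕ, ∀ n : ℕ, N ≤ n →
    a (n + d) = ∑ i : Fin d, β i * a (n + (i : ℕ))

/-- `(a n)_{n ≥ 1}` is holonomic: it satisfies a nontrivial recurrence with
polynomial coefficients. -/
def Holonomic (a : ℕ → ℂ) : Prop :=
  ∃ d : ℕ, ∃ q : Fin (d + 1) → Polynomial ℂ, (∃ i, q i ≠ 0) ∧
    ∀ n : ℕ, 1 ≤ n → ∑ i : Fin (d + 1), (q i).eval (n : ℂ) * a (n + (i : ℕ)) = 0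

/-- The Taylor coefficients of `ζ(z) = exp (∑_{n ≥ 1} a n zⁿ / n)`, defined via the
logarithmic-derivative recursion `(n+1)·c_{n+1} = ∑_{k=0}^{n} a_{k+1} c_{n-k}`, `c₀ = 1`. -/
noncomputable def zetaCoeff (a : ℕ → ℂ) : ℕ → ℂ
  | 0 => 1
  | n + 1 =>
    ((n : ℂ) + 1)⁻¹ * ∑ k ∈ Finset.range (n + 1), a (k + 1) * zetaCoeff a (n - k)
  termination_by n => n
  decreasing_by omega

/-- The zeta function `ζ(z) = exp (∑_{n ≥ 1} a n zⁿ / n)` of a sequence,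
as a formal power series. -/
noncomputable def zetaPS (a : ℕ → ℂ) : PowerSeries ℂ := PowerSeries.mk (zetaCoeff a)

/-- A formal power series over `ℂ` is the expansion of a rational function of `ℂ(z)`. -/
def IsExpansionOfRationalC (F : PowerSeries ℂ) : Prop :=
  ∃ P Q : Polynomial ℂ, Q ≠ 0 ∧ F * (Q : PowerSeries ℂ) = (P : PowerSeries ℂ)

/-- A formal power series over `ℂ` is the expansion of a rational function of `ℚ(z)`. -/
def IsExpansionOfRationalOverQ (F : PowerSeries ℂ) : Prop :=
  ∃ P Q : Polynomial ℚ, Q ≠ 0 ∧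
    F * ((Q.map (algebraMap ℚ ℂ) : Polynomial ℂ) : PowerSeries ℂ) =
      ((P.map (algebraMap ℚ ℂ) : Polynomial ℂ) : PowerSeries ℂ)

/-- A formal power series is algebraic over `ℂ(z)` (equivalently over `ℂ[z]`):
it satisfies a nonzero polynomial equation with coefficients in `ℂ[z]`. -/
def AlgebraicOverRatFuncs (F : PowerSeries ℂ) : Prop :=
  ∃ q : Polynomial (Polynomial ℂ), q ≠ 0 ∧
    Polynomial.eval₂ Polynomial.coeToPowerSeries.ringHom F q = 0

/-- An integer sequence is realisable if it is the fixed point count of some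
set-theoretic dynamical system. -/
def Realisable (a : ℕ → ℤ) : Prop :=
  ∃ (X : Type) (f : X → X), ∀ n : ℕ, 1 ≤ n →
    (Function.fixedPoints (f^[n])).Finite ∧
    a n = (Nat.card (Function.fixedPoints (f^[n])) : ℤ)

/-- The oscillating factor `u_n = ∏_{|ξᵢ| = 1} (ξᵢⁿ − 1)` over the eigenvalues of `A`
of modulus one. -/
noncomputable def uSeq {k : ℕ} (A : Matrix (Fin k) (Fin k) ℤ) (n : ℕ) : ℂ :=
  ((((A.map (Int.cast : ℤ → ℂ)).charpoly.roots).filter fun ξ => ‖ξ‖ = 1).map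
    fun ξ => ξ ^ n - 1).prod

/-!
The Taylor coefficients `ζₙ` of `ζ_f` satisfy `n ζₙ = ∑_{k=1}^{n} f_k ζ_{n-k}`; hence they are
nonnegative, at least `fₙ / n`, and monotone in the sequence `(fₙ)`.

Since `|det(Aⁿ - 1)| = ∏ᵢ |ξᵢⁿ - 1|`, the FAD form gives `fₙ ≤ C Λⁿ`. Comparison with
`exp (C ∑ (Λz)ⁿ / n) = (1 - Λz)^{-C}`, whose coefficients are `Λⁿ` times a sequence with ratios
`(n + C) / (n + 1) → 1`, gives convergence for `|z| < 1/Λ`.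

Conversely `fₙ ≥ δ Λⁿ` for infinitely many `n`. With `Q = ∏_{p ∈ S} p`, take `n = Q D + 1`, so that
every `p ∈ S` is prime to `n` and the `p`-adic factors are bounded below, and choose `D` by
compactness of the torus so that `ξ^D ≈ 1` for all eigenvalues `ξ` on the unit circle; then
`|ξⁿ - 1| ≈ |ξ - 1| > 0` as no `ξ` is a root of unity. So `ζₙ |z|ⁿ ≥ δ (Λ|z|)ⁿ / n` infinitely
often, and this is unbounded when `|z| > 1/Λ`.
-/

open Topology

noncomputable def zetaCoeffReal (b : ℕ → ℝ) : ℕ → ℝ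
  | 0 => 1
  | n + 1 => ((n : ℝ) + 1)⁻¹ * ∑ k ∈ Finset.range (n + 1), b (k + 1) * zetaCoeffReal b (n - k)
  termination_by n => n
  decreasing_by omega

section zetaCoeffReal

variable {b b' : ℕ → ℝ}

theorem zetaCoeffReal_zero (b : ℕ → ℝ) : zetaCoeffReal b 0 = 1 := by
  rw [zetaCoeffReal]

theorem zetaCoeffReal_succ (b : ℕ → ℝ) (n : ℕ) :
    zetaCoeffReal b (n + 1) =
      ((n : ℝ) + 1)⁻¹ * ∑ k ∈ Finset.range (n + 1), b (k + 1) * zetaCoeffReal b (n - k) := by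
  rw [zetaCoeffReal]

theorem zetaCoeff_ofReal (b : ℕ → ℝ) (n : ℕ) :
    zetaCoeff (fun m => (b m : ℂ)) n = zetaCoeffReal b n := by
  induction n using Nat.strong_induction_on with
  | _ n ih =>
    cases n with
    | zero => rw [zetaCoeff, zetaCoeffReal_zero, Complex.ofReal_one]
    | succ n =>
      rw [zetaCoeff, zetaCoeffReal_succ]
      push_cast
      congr 1
      exact Finset.sum_congr rfl fun k hk => by rw [ih (n - k) (by omega)]

theorem zetaCoeffReal_nonneg (hb : ∀ m, 1 ≤ m → 0 ≤ b m) (n : ℕ) : 0 ≤ zetaCoeffReal b n := by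
  induction n using Nat.strong_induction_on with
  | _ n ih =>
    cases n with
    | zero => rw [zetaCoeffReal_zero]; exact zero_le_one
    | succ n =>
      rw [zetaCoeffReal_succ]
      exact mul_nonneg (by positivity) <| Finset.sum_nonneg fun k _ =>
        mul_nonneg (hb (k + 1) (by omega)) (ih (n - k) (by omega))

theorem div_le_zetaCoeffReal (hb : ∀ m, 1 ≤ m → 0 ≤ b m) {n : ℕ} (hn : 1 ≤ n) :
    b n / n ≤ zetaCoeffReal b n := by
  obtain ⟨n, rfl⟩ := Nat.exists_eq_add_of_le' hn
  have hlast : b (n + 1) = b (n + 1) * zetaCoeffReal b (n - n) := by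
    rw [Nat.sub_self, zetaCoeffReal_zero, mul_one]
  rw [zetaCoeffReal_succ, div_eq_inv_mul, Nat.cast_succ, hlast]
  gcongr
  exact Finset.single_le_sum (f := fun k => b (k + 1) * zetaCoeffReal b (n - k))
    (fun k _ => mul_nonneg (hb (k + 1) (by omega)) (zetaCoeffReal_nonneg hb _))
    (Finset.self_mem_range_succ n)

theorem zetaCoeffReal_mono (hb : ∀ m, 1 ≤ m → 0 ≤ b m) (hbb' : ∀ m, 1 ≤ m → b m ≤ b' m)
    (n : ℕ) : zetaCoeffReal b n ≤ zetaCoeffReal b' n := by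
  induction n using Nat.strong_induction_on with
  | _ n ih =>
    cases n with
    | zero => rw [zetaCoeffReal_zero, zetaCoeffReal_zero]
    | succ n =>
      rw [zetaCoeffReal_succ, zetaCoeffReal_succ]
      refine mul_le_mul_of_nonneg_left (Finset.sum_le_sum fun k hk => ?_) (by positivity)
      have hk := Finset.mem_range.mp hk
      exact mul_le_mul (hbb' (k + 1) (by omega)) (ih (n - k) (by omega))
        (zetaCoeffReal_nonneg hb _) ((hb (k + 1) (by omega)).trans (hbb' (k + 1) (by omega)))

theorem zetaCoeffReal_pow_mul (Λ : ℝ) (b : ℕ → ℝ) (n : ℕ) :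
    zetaCoeffReal (fun m => Λ ^ m * b m) n = Λ ^ n * zetaCoeffReal b n := by
  induction n using Nat.strong_induction_on with
  | _ n ih =>
    cases n with
    | zero => rw [zetaCoeffReal_zero, zetaCoeffReal_zero, pow_zero, one_mul]
    | succ n =>
      rw [zetaCoeffReal_succ, zetaCoeffReal_succ, Finset.mul_sum, Finset.mul_sum, Finset.mul_sum]
      refine Finset.sum_congr rfl fun k hk => ?_
      have hk : k + 1 + (n - k) = n + 1 := by have := Finset.mem_range.mp hk; omega
      rw [ih (n - k) (by omega), ← hk, pow_add]
      ring

/-- `zetaCoeffReal (fun _ => C)` are the coefficients of `exp (C ∑ zⁿ / n) = (1 - z)^{-C}`. -/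
theorem zetaCoeffReal_const_succ (C : ℝ) (n : ℕ) :
    ((n : ℝ) + 1) * zetaCoeffReal (fun _ => C) (n + 1) =
      (n + C) * zetaCoeffReal (fun _ => C) n := by
  cases n with
  | zero => simp [zetaCoeffReal_succ, zetaCoeffReal_zero]
  | succ n =>
    have hprev : ((n : ℝ) + 1) * zetaCoeffReal (fun _ => C) (n + 1) =
        C * ∑ k ∈ Finset.range (n + 1), zetaCoeffReal (fun _ => C) (n - k) := by
      rw [zetaCoeffReal_succ, mul_inv_cancel_left₀ (by positivity), Finset.mul_sum]
    rw [zetaCoeffReal_succ, mul_inv_cancel_left₀ (by positivity), Finset.sum_range_succ',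
      ← Finset.mul_sum]
    simp only [Nat.add_sub_add_right, Nat.sub_zero, Nat.cast_succ]
    linear_combination -hprev

theorem summable_zetaCoeffReal_const_mul_pow {C x : ℝ} (hC : 0 ≤ C) (hx₀ : 0 ≤ x) (hx : x < 1) :
    Summable fun n => zetaCoeffReal (fun _ => C) n * x ^ n := by
  set g := zetaCoeffReal fun _ => C
  have hratio : Tendsto (fun n : ℕ => (C + n) / (1 + n) * x) atTop (𝓝 x) := by
    simpa using (tendsto_add_mul_div_add_mul_atTop_nhds C 1 1 one_ne_zero).mul_const x
  refine summable_of_ratio_norm_eventually_le (r := (1 + x) / 2) (by linarith) ?_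
  filter_upwards [hratio.eventually_le_const (by linarith : x < (1 + x) / 2)] with n hn
  have hg : g (n + 1) = (C + n) / (1 + n) * g n := by
    have := zetaCoeffReal_const_succ C n
    field_simp
    linarith
  have hg₀ : ∀ m, 0 ≤ g m := zetaCoeffReal_nonneg fun _ _ => hC
  rw [Real.norm_of_nonneg (mul_nonneg (hg₀ _) (by positivity)),
    Real.norm_of_nonneg (mul_nonneg (hg₀ _) (by positivity)), hg, pow_succ]
  calc (C + n) / (1 + n) * g n * (x ^ n * x) = (C + n) / (1 + n) * x * (g n * x ^ n) := by ring
    _ ≤ (1 + x) / 2 * (g n * x ^ n) := by gcongr; exact mul_nonneg (hg₀ n) (by positivity)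

theorem summable_zetaCoeffReal_mul_pow (hb : ∀ m, 1 ≤ m → 0 ≤ b m) {C Λ x : ℝ} (hC : 0 ≤ C)
    (hbC : ∀ m, 1 ≤ m → b m ≤ C * Λ ^ m) (hΛ : 0 ≤ Λ) (hx : 0 ≤ x) (hΛx : Λ * x < 1) :
    Summable fun n => zetaCoeffReal b n * x ^ n := by
  refine (summable_zetaCoeffReal_const_mul_pow hC (by positivity) hΛx).of_nonneg_of_le
    (fun n => mul_nonneg (zetaCoeffReal_nonneg hb n) (by positivity)) fun n => ?_
  have hle : zetaCoeffReal b n ≤ Λ ^ n * zetaCoeffReal (fun _ => C) n := by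
    rw [← zetaCoeffReal_pow_mul]
    exact zetaCoeffReal_mono (b' := fun m => Λ ^ m * C) hb
      (fun m hm => (hbC m hm).trans_eq (mul_comm _ _)) n
  calc zetaCoeffReal b n * x ^ n ≤ Λ ^ n * zetaCoeffReal (fun _ => C) n * x ^ n := by gcongr
    _ = zetaCoeffReal (fun _ => C) n * (Λ * x) ^ n := by ring

theorem not_summable_zetaCoeffReal_mul_pow (hb : ∀ m, 1 ≤ m → 0 ≤ b m) {δ Λ x : ℝ} (hδ : 0 < δ)
    (hbδ : ∃ᶠ m in atTop, δ * Λ ^ m ≤ b m) (hx : 0 ≤ x) (hΛx : 1 < Λ * x) :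
    ¬ Summable fun n => zetaCoeffReal b n * x ^ n := by
  intro hsum
  have hsmall := hsum.tendsto_atTop_zero.eventually_lt_const one_pos
  have hgrowth := (tendsto_pow_const_div_const_pow_of_one_lt 1 hΛx).eventually_lt_const hδ
  obtain ⟨n, hbn, hsmall, hgrowth, hn⟩ :=
    (hbδ.and_eventually (hsmall.and (hgrowth.and (eventually_ge_atTop 1)))).exists
  have hn₀ : (0 : ℝ) < n := by exact_mod_cast hn
  rw [pow_one, div_lt_iff₀ (by positivity)] at hgrowth
  have : δ * (Λ * x) ^ n / n ≤ zetaCoeffReal b n * x ^ n :=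
    calc δ * (Λ * x) ^ n / n = δ * Λ ^ n / n * x ^ n := by ring
      _ ≤ b n / n * x ^ n := by gcongr
      _ ≤ zetaCoeffReal b n * x ^ n := by gcongr; exact div_le_zetaCoeffReal hb hn
  rw [div_le_iff₀ hn₀] at this
  nlinarith

end zetaCoeffReal

section Determinant
open Polynomial

variable {K ι : Type*} [Field K] [IsAlgClosed K] [Fintype ι] [DecidableEq ι]

theorem Matrix.det_sub_smul_one_eq_prod_roots_charpoly (B : Matrix ι ι K) (a : K) :
    (B - a • (1 : Matrix ι ι K)).det = (B.charpoly.roots.map fun ξ => ξ - a).prod := by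
  have hcard : Multiset.card B.charpoly.roots = Fintype.card ι := by
    rw [IsAlgClosed.card_roots_eq_natDegree, Matrix.charpoly_natDegree_eq_dim]
  have heval : B.charpoly.eval a = (B.charpoly.roots.map fun ξ => a - ξ).prod := by
    conv_lhs => rw [(IsAlgClosed.splits B.charpoly).eq_prod_roots_of_monic B.charpoly_monic]
    simp [eval_multiset_prod, Multiset.map_map]
  rw [← neg_sub, Matrix.det_neg, Matrix.smul_one_eq_diagonal, ← Matrix.scalar_apply,
    ← Matrix.eval_charpoly, heval, ← hcard, ← Multiset.card_map (fun ξ => a - ξ),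
    ← Multiset.prod_map_neg, Multiset.map_map]
  simp

theorem Matrix.det_aeval_eq_prod_roots_charpoly (B : Matrix ι ι K) (p : K[X]) :
    (aeval B p).det = (B.charpoly.roots.map p.eval).prod := by
  have hcard : Multiset.card B.charpoly.roots = Fintype.card ι := by
    rw [IsAlgClosed.card_roots_eq_natDegree, Matrix.charpoly_natDegree_eq_dim]
  let detAeval : K[X] →* K := Matrix.detMonoidHom.comp (aeval B).toMonoidHom
  have hdetAeval (q : K[X]) : detAeval q = (aeval B q).det := rfl
  rw [← C_leadingCoeff_mul_prod_multiset_X_sub_C (IsAlgClosed.card_roots_eq_natDegree (p := p)),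
    ← hdetAeval, map_mul, map_multiset_prod, Multiset.map_map]
  simp only [Function.comp_def, hdetAeval, aeval_C, map_sub, aeval_X,
    Matrix.det_sub_smul_one_eq_prod_roots_charpoly, Algebra.algebraMap_eq_smul_one,
    Matrix.det_smul, Matrix.det_one, mul_one, eval_mul, eval_C, eval_multiset_prod,
    Multiset.map_map, eval_sub, eval_X, Multiset.prod_map_mul, Multiset.map_const',
    Multiset.prod_replicate, hcard]
  rw [Multiset.prod_map_prod_map]

theorem Matrix.abs_det_pow_sub_one (A : Matrix ι ι ℤ) (n : ℕ) :
    |((A ^ n - 1).det : ℝ)| =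
      ((A.map (Int.cast : ℤ → ℂ)).charpoly.roots.map fun ξ => ‖ξ ^ n - 1‖).prod := by
  have hmap : (Int.castRingHom ℂ).mapMatrix (A ^ n - 1) =
      aeval (A.map (Int.cast : ℤ → ℂ)) (X ^ n - 1 : ℂ[X]) := by
    rw [map_sub, map_pow, map_one, map_sub, map_pow, aeval_X, map_one]
    rfl
  rw [← Complex.norm_intCast, ← eq_intCast (Int.castRingHom ℂ), RingHom.map_det,
    hmap, Matrix.det_aeval_eq_prod_roots_charpoly,
    ← normHom_apply, map_multiset_prod, Multiset.map_map]
  simp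

end Determinant

theorem Complex.norm_pow_sub_one_le (ξ : ℂ) (n : ℕ) : ‖ξ ^ n - 1‖ ≤ 2 * max 1 ‖ξ‖ ^ n := by
  have hξ : ‖ξ‖ ^ n ≤ max 1 ‖ξ‖ ^ n := by gcongr; exact le_max_right _ _
  have h1 : 1 ≤ max 1 ‖ξ‖ ^ n := one_le_pow₀ (le_max_left _ _)
  calc ‖ξ ^ n - 1‖ ≤ ‖ξ‖ ^ n + 1 := by simpa using norm_sub_le (ξ ^ n) 1
    _ ≤ 2 * max 1 ‖ξ‖ ^ n := by linarith

theorem Multiset.prod_map_norm_pow_sub_one_le (s : Multiset ℂ) (n : ℕ) :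
    (s.map fun ξ => ‖ξ ^ n - 1‖).prod ≤
      2 ^ Multiset.card s * (s.map fun ξ => max 1 ‖ξ‖).prod ^ n := by
  calc (s.map fun ξ => ‖ξ ^ n - 1‖).prod ≤ (s.map fun ξ => 2 * max 1 ‖ξ‖ ^ n).prod :=
        Multiset.prod_map_le_prod_map₀ _ _ (fun _ _ => norm_nonneg _)
          fun ξ _ => ξ.norm_pow_sub_one_le n
    _ = 2 ^ Multiset.card s * (s.map fun ξ => max 1 ‖ξ‖).prod ^ n := by
      rw [Multiset.prod_map_mul, Multiset.map_const', Multiset.prod_replicate,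
        Multiset.prod_map_pow]

theorem Complex.exists_pos_eventually_mul_le_norm_pow_sub_one {ξ : ℂ} (hξ : ‖ξ‖ ≠ 1) :
    ∃ c > 0, ∀ᶠ n in atTop, c * max 1 ‖ξ‖ ^ n ≤ ‖ξ ^ n - 1‖ := by
  rcases hξ.lt_or_gt with hlt | hgt
  · refine ⟨1 - ‖ξ‖, by linarith, ?_⟩
    filter_upwards [eventually_ge_atTop 1] with n hn
    have hpow : ‖ξ‖ ^ n ≤ ‖ξ‖ := pow_le_of_le_one (norm_nonneg _) hlt.le (by omega)
    have hrev : 1 - ‖ξ‖ ^ n ≤ ‖ξ ^ n - 1‖ := by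
      simpa [norm_sub_rev] using norm_sub_norm_le (1 : ℂ) (ξ ^ n)
    rw [max_eq_left hlt.le, one_pow, mul_one]
    linarith
  · refine ⟨1 / 2, by norm_num, ?_⟩
    filter_upwards [(tendsto_pow_atTop_atTop_of_one_lt hgt).eventually_ge_atTop 2] with n hn
    have hrev : ‖ξ‖ ^ n - 1 ≤ ‖ξ ^ n - 1‖ := by
      simpa using norm_sub_norm_le (ξ ^ n) 1
    rw [max_eq_right hgt.le]
    linarith

theorem Finset.exists_tendsto_pow_nhds_one (s : Finset ℂ) (hs : ∀ ξ ∈ s, ‖ξ‖ = 1) :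
    ∃ D : ℕ → ℕ, Tendsto D atTop atTop ∧ ∀ ξ ∈ s, Tendsto (fun i => ξ ^ D i) atTop (𝓝 1) := by
  let u : ℕ → s → ℂ := fun m ξ => (ξ : ℂ) ^ m
  have hu : ∀ m, u m ∈ Set.univ.pi fun _ => Metric.sphere (0 : ℂ) 1 := fun m ξ _ => by
    simp [u, hs ξ ξ.2]
  obtain ⟨x, hx, φ, hφ, hconv⟩ :=
    (isCompact_univ_pi fun _ => isCompact_sphere (0 : ℂ) 1).tendsto_subseq hu
  have hφle : ∀ i, φ i + i ≤ φ (φ i + i) := fun i => hφ.id_le _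
  -- `ξ ^ φ (φ i + i)` and `ξ ^ φ i` have the same limit, so their quotient tends to `1`.
  refine ⟨fun i => φ (φ i + i) - φ i, ?_, fun ξ hξ => ?_⟩
  · exact tendsto_atTop_mono (fun i => show i ≤ _ by have := hφle i; omega) tendsto_id
  have hcoord : Tendsto (fun i => ξ ^ φ i) atTop (𝓝 (x ⟨ξ, hξ⟩)) :=
    tendsto_pi_nhds.mp hconv ⟨ξ, hξ⟩
  have hx₀ : x ⟨ξ, hξ⟩ ≠ 0 := ne_zero_of_mem_sphere one_ne_zero ⟨_, hx ⟨ξ, hξ⟩ trivial⟩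
  have hξ₀ : ξ ≠ 0 := norm_ne_zero_iff.mp (by rw [hs ξ hξ]; exact one_ne_zero)
  have hlim := (hcoord.comp (tendsto_atTop_mono (fun i => Nat.le_add_left i (φ i))
    tendsto_id)).div hcoord hx₀
  rw [div_self hx₀] at hlim
  refine hlim.congr fun i => ?_
  rw [Pi.div_apply, Function.comp_apply, pow_sub₀ _ hξ₀ (by have := hφle i; omega),
    div_eq_mul_inv]

theorem Multiset.exists_frequently_modEq_mul_pow_le_prod_map_norm_pow_sub_one (s : Multiset ℂ)
    (hs : (1 : ℂ) ∉ s) {Q : ℕ} (hQ : 0 < Q) :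
    ∃ δ > 0, ∃ᶠ n in atTop, n ≡ 1 [MOD Q] ∧
      δ * (s.map fun ξ => max 1 ‖ξ‖).prod ^ n ≤ (s.map fun ξ => ‖ξ ^ n - 1‖).prod := by
  obtain ⟨D, hD, hDlim⟩ := (s.toFinset.filter fun ξ => ‖ξ‖ = 1).exists_tendsto_pow_nhds_one
    fun ξ hξ => (Finset.mem_filter.mp hξ).2
  set n : ℕ → ℕ := fun i => Q * D i + 1
  have hn : Tendsto n atTop atTop :=
    (tendsto_add_atTop_nat 1).comp (hD.const_mul_atTop' hQ)
  have hroot : ∀ ξ ∈ s, ∃ c > 0, ∀ᶠ i in atTop, c * max 1 ‖ξ‖ ^ n i ≤ ‖ξ ^ n i - 1‖ := by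
    intro ξ hξ
    by_cases hunit : ‖ξ‖ = 1
    · have hξ1 : 0 < ‖ξ - 1‖ := norm_pos_iff.mpr (sub_ne_zero.mpr (ne_of_mem_of_not_mem hξ hs))
      have hD₁ := hDlim ξ (Finset.mem_filter.mpr ⟨Multiset.mem_toFinset.mpr hξ, hunit⟩)
      have hlim : Tendsto (fun i => ‖ξ ^ n i - 1‖) atTop (𝓝 ‖ξ * 1 ^ Q - 1‖) :=
        (((hD₁.pow Q).const_mul ξ).sub_const 1).norm.congr fun i => by rw [pow_succ', pow_mul']
      rw [one_pow, mul_one] at hlim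
      refine ⟨‖ξ - 1‖ / 2, half_pos hξ1, ?_⟩
      filter_upwards [hlim.eventually_const_le (half_lt_self hξ1)] with i hi
      rwa [hunit, max_self, one_pow, mul_one]
    · obtain ⟨c, hc, hev⟩ := ξ.exists_pos_eventually_mul_le_norm_pow_sub_one hunit
      exact ⟨c, hc, hn.eventually hev⟩
  choose! c hc hev using hroot
  refine ⟨(s.map c).prod, Multiset.prod_pos fun _ h => ?_,
    hn.frequently (Eventually.frequently ?_)⟩
  · obtain ⟨ξ, hξ, rfl⟩ := Multiset.mem_map.mp h
    exact hc ξ hξ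
  filter_upwards [(eventually_all_finset s.toFinset).mpr fun ξ hξ =>
    hev ξ (Multiset.mem_toFinset.mp hξ)] with i hi
  refine ⟨by simp [n, Nat.ModEq], ?_⟩
  calc (s.map c).prod * (s.map fun ξ => max 1 ‖ξ‖).prod ^ n i
      = (s.map fun ξ => c ξ * max 1 ‖ξ‖ ^ n i).prod := by
        rw [Multiset.prod_map_mul, Multiset.prod_map_pow]
    _ ≤ (s.map fun ξ => ‖ξ ^ n i - 1‖).prod :=
        Multiset.prod_map_le_prod_map₀ _ _
          (fun ξ hξ => mul_nonneg (hc ξ hξ).le (by positivity))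
          fun ξ hξ => hi ξ (Multiset.mem_toFinset.mpr hξ)

theorem IsGcdSeq.exists_forall_le {α : Type*} [LinearOrder α] {x : ℕ → α} (hx : IsGcdSeq x) :
    ∃ j ≥ 1, ∀ n, 1 ≤ n → x j ≤ x n := by
  obtain ⟨d, hd, hgcd⟩ := hx
  obtain ⟨j, hj, hmin⟩ := d.divisors.exists_min_image x (Nat.nonempty_divisors.mpr (by omega))
  refine ⟨j, Nat.pos_of_mem_divisors hj, fun n hn => ?_⟩
  rw [hgcd n hn]
  exact hmin _ (Nat.mem_divisors.mpr ⟨Nat.gcd_dvd_right n d, by omega⟩)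

theorem IsGcdSeq.exists_forall_ge {α : Type*} [LinearOrder α] {x : ℕ → α} (hx : IsGcdSeq x) :
    ∃ j ≥ 1, ∀ n, 1 ≤ n → x n ≤ x j :=
  IsGcdSeq.exists_forall_le (α := αᵒᵈ) hx

theorem IsGcdSeqCoprime.isGcdSeq {α : Type*} {x : ℕ → α} {p : ℕ} (hx : IsGcdSeqCoprime x p) :
    IsGcdSeq x :=
  let ⟨d, hd, _, hgcd⟩ := hx
  ⟨d, hd, hgcd⟩

section padicAbs

variable {p : ℕ}

theorem padicAbs_pos (hp : 0 < p) (n : ℕ) : 0 < padicAbs p n := by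
  unfold padicAbs
  positivity

theorem padicAbs_le_one (hp : 0 < p) (n : ℕ) : padicAbs p n ≤ 1 :=
  inv_le_one_of_one_le₀ (one_le_pow₀ (by exact_mod_cast hp))

theorem padicAbs_of_not_dvd {n : ℕ} (h : ¬ p ∣ n) : padicAbs p n = 1 := by
  rw [padicAbs, padicValNat.eq_zero_of_not_dvd h, pow_zero, inv_one]

variable {σ τ : ℝ}

theorem padicAbs_rpow_mul_rpow_pos (hp : 0 < p) (n : ℕ) :
    0 < padicAbs p n ^ σ * (p : ℝ) ^ (-τ * (padicAbs p n)⁻¹) := by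
  have := padicAbs_pos hp n
  have : (0 : ℝ) < p := by exact_mod_cast hp
  positivity

theorem padicAbs_rpow_mul_rpow_le_one (hp : 0 < p) (hσ : 0 ≤ σ) (hτ : 0 ≤ τ) (n : ℕ) :
    padicAbs p n ^ σ * (p : ℝ) ^ (-τ * (padicAbs p n)⁻¹) ≤ 1 := by
  have hpos := padicAbs_pos hp n
  refine mul_le_one₀ (Real.rpow_le_one hpos.le (padicAbs_le_one hp n) hσ) (by positivity) ?_
  exact Real.rpow_le_one_of_one_le_of_nonpos (by exact_mod_cast hp)
    (mul_nonpos_of_nonpos_of_nonneg (by linarith) (by positivity))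

end padicAbs

section fadFactor

variable {S : Finset ℕ} {r : ℕ → ℝ} {s t : ℕ → ℕ → ℝ} {n : ℕ}

theorem fadFactor_pos (hS : ∀ p ∈ S, p.Prime) (hr : 0 < r n) : 0 < fadFactor S r s t n :=
  mul_pos hr <| Finset.prod_pos fun p hp => padicAbs_rpow_mul_rpow_pos (hS p hp).pos n

theorem fadFactor_le (hS : ∀ p ∈ S, p.Prime) (hs : ∀ p ∈ S, 0 ≤ s p n) (ht : ∀ p ∈ S, 0 ≤ t p n)
    (hr : 0 ≤ r n) : fadFactor S r s t n ≤ r n :=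
  mul_le_of_le_one_right hr <| Finset.prod_le_one
    (fun p hp => (padicAbs_rpow_mul_rpow_pos (hS p hp).pos n).le)
    fun p hp => padicAbs_rpow_mul_rpow_le_one (hS p hp).pos (hs p hp) (ht p hp) n

theorem fadFactor_of_forall_not_dvd (h : ∀ p ∈ S, ¬ p ∣ n) :
    fadFactor S r s t n = r n * ∏ p ∈ S, (p : ℝ) ^ (-t p n) := by
  rw [fadFactor]
  congr 1
  refine Finset.prod_congr rfl fun p hp => ?_
  rw [padicAbs_of_not_dvd (h p hp), Real.one_rpow, inv_one, mul_one, one_mul]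

end fadFactor

theorem one_le_prod_map_max_one_norm (s : Multiset ℂ) : 1 ≤ (s.map fun ξ => max 1 ‖ξ‖).prod :=
  Multiset.one_le_prod_map fun _ _ => le_max_left _ _

theorem expEntropy_pos {k : ℕ} (A : Matrix (Fin k) (Fin k) ℤ) {c : ℝ} (hc : 0 < c) :
    0 < expEntropy A c :=
  mul_pos hc (zero_lt_one.trans_le (one_le_prod_map_max_one_norm _))

namespace IsFADWith

variable {a : ℕ → ℤ} {k : ℕ} {A : Matrix (Fin k) (Fin k) ℤ} {S : Finset ℕ} {c : ℝ} {r : ℕ → ℝ}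
  {s t : ℕ → ℕ → ℝ}

theorem exists_le_mul_expEntropy_pow (h : IsFADWith a A S c r s t) :
    ∃ C ≥ 0, ∀ n, 1 ≤ n → (a n : ℝ) ≤ C * expEntropy A c ^ n := by
  obtain ⟨-, hS, hc, hr, hrpos, hs, ht, ha⟩ := h
  obtain ⟨j, hj, hrmax⟩ := hr.exists_forall_ge
  set roots := (A.map (Int.cast : ℤ → ℂ)).charpoly.roots
  refine ⟨2 ^ Multiset.card roots * r j, by have := hrpos j hj; positivity, fun n hn => ?_⟩
  have hfad : fadFactor S r s t n ≤ r j :=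
    (fadFactor_le hS (fun p hp => (hs p hp).2 n hn) (fun p hp => (ht p hp).2 n hn)
      (hrpos n hn).le).trans (hrmax n hn)
  rw [ha n hn, Matrix.abs_det_pow_sub_one, expEntropy, mul_pow]
  calc (roots.map fun ξ => ‖ξ ^ n - 1‖).prod * c ^ n * fadFactor S r s t n
      ≤ (2 ^ Multiset.card roots * (roots.map fun ξ => max 1 ‖ξ‖).prod ^ n) * c ^ n * r j := by
        have := fadFactor_pos (s := s) (t := t) hS (hrpos n hn)
        have := roots.prod_map_norm_pow_sub_one_le n
        have := one_le_prod_map_max_one_norm roots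
        gcongr
    _ = 2 ^ Multiset.card roots * r j * (c ^ n * (roots.map fun ξ => max 1 ‖ξ‖).prod ^ n) := by
        ring

theorem exists_frequently_mul_expEntropy_pow_le (h : IsFADWith a A S c r s t) :
    ∃ δ > 0, ∃ᶠ n in atTop, δ * expEntropy A c ^ n ≤ a n := by
  obtain ⟨hA, hS, hc, hr, hrpos, -, ht, ha⟩ := h
  obtain ⟨j, hj, hrmin⟩ := hr.exists_forall_le
  have htmax : ∀ p ∈ S, ∃ T, ∀ n, 1 ≤ n → t p n ≤ T := fun p hp =>
    let ⟨i, _, hi⟩ := (ht p hp).1.isGcdSeq.exists_forall_ge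
    ⟨t p i, hi⟩
  choose! T hT using htmax
  set roots := (A.map (Int.cast : ℤ → ℂ)).charpoly.roots
  have h1 : (1 : ℂ) ∉ roots := fun h1 => hA 1 (Polynomial.mem_roots'.mp h1).2 1 le_rfl (one_pow 1)
  obtain ⟨δ, hδ, hfreq⟩ := roots.exists_frequently_modEq_mul_pow_le_prod_map_norm_pow_sub_one h1
    (Finset.prod_pos fun p hp => (hS p hp).pos)
  refine ⟨δ * r j * ∏ p ∈ S, (p : ℝ) ^ (-T p), ?_, ?_⟩
  · have := hrpos j hj
    have := Finset.prod_pos fun p hp =>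
      Real.rpow_pos_of_pos (Nat.cast_pos.mpr (hS p hp).pos) (-T p)
    positivity
  refine (hfreq.and_eventually (eventually_ge_atTop 1)).mono fun n ⟨⟨hmod, hdet⟩, hn⟩ => ?_
  have hcop : ∀ p ∈ S, ¬ p ∣ n := fun p hp hpn =>
    (hS p hp).not_dvd_one ((hmod.dvd_iff (Finset.dvd_prod_of_mem _ hp)).mp hpn)
  rw [ha n hn, Matrix.abs_det_pow_sub_one, fadFactor_of_forall_not_dvd hcop, expEntropy, mul_pow]
  calc (δ * r j * ∏ p ∈ S, (p : ℝ) ^ (-T p)) * (c ^ n * (roots.map fun ξ => max 1 ‖ξ‖).prod ^ n)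
      = δ * (roots.map fun ξ => max 1 ‖ξ‖).prod ^ n * c ^ n *
          (r j * ∏ p ∈ S, (p : ℝ) ^ (-T p)) := by
        ring
    _ ≤ (roots.map fun ξ => ‖ξ ^ n - 1‖).prod * c ^ n * (r n * ∏ p ∈ S, (p : ℝ) ^ (-t p n)) := by
        have := hrpos j hj
        have : 0 ≤ (roots.map fun ξ => ‖ξ ^ n - 1‖).prod :=
          Multiset.prod_map_nonneg fun _ _ => norm_nonneg _
        have := hrpos n hn
        have := hrmin n hn
        gcongr with p hp
        · exact_mod_cast (hS p hp).one_lt.le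
        · exact hT p hp n hn

end IsFADWith

theorem fad_zeta_radius_general {X : Type*} (f : X → X)
    {k : ℕ} (A : Matrix (Fin k) (Fin k) ℤ) (S : Finset ℕ) (c : ℝ)
    (r : ℕ → ℝ) (s t : ℕ → ℕ → ℝ)
    (hFAD : IsFADWith (fixCount f) A S c r s t) :
    (∀ z : ℂ, ‖z‖ < (expEntropy A c)⁻¹ →
      Summable fun n : ℕ =>
        ‖zetaCoeff (fun m => (fixCount f m : ℂ)) n‖ * ‖z‖ ^ n) ∧
    (∀ z : ℂ, (expEntropy A c)⁻¹ < ‖z‖ →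
      ¬ Summable fun n : ℕ =>
        ‖zetaCoeff (fun m => (fixCount f m : ℂ)) n‖ * ‖z‖ ^ n) := by
  have hΛ : 0 < expEntropy A c := expEntropy_pos A hFAD.2.2.1
  have hb : ∀ m, 1 ≤ m → (0 : ℝ) ≤ fixCount f m := fun m _ => by
    simp [fixCount]
  have hnorm (n : ℕ) : ‖zetaCoeff (fun m => (fixCount f m : ℂ)) n‖ =
      zetaCoeffReal (fun m => (fixCount f m : ℝ)) n := by
    simp_rw [← Complex.ofReal_intCast, zetaCoeff_ofReal, Complex.norm_real, Real.norm_eq_abs,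
      abs_of_nonneg (zetaCoeffReal_nonneg hb n)]
  simp_rw [hnorm]
  obtain ⟨C, hC, hup⟩ := hFAD.exists_le_mul_expEntropy_pow
  obtain ⟨δ, hδ, hlow⟩ := hFAD.exists_frequently_mul_expEntropy_pow_le
  refine ⟨fun z hz => ?_, fun z hz => ?_⟩
  · exact summable_zetaCoeffReal_mul_pow hb hC hup hΛ.le (norm_nonneg z)
      ((lt_inv_mul_iff₀ hΛ).mp (by rwa [mul_one]))
  · exact not_summable_zetaCoeffReal_mul_pow hb hδ hlow (norm_nonneg z)
      ((inv_lt_iff_one_lt_mul₀' hΛ).mp hz)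

/-- the radius of convergence of the dynamical zeta function of a
FAD-system equals `1/Λ`: the series converges absolutely on `|z| < 1/Λ` and is not
summable for `|z| > 1/Λ`. -/
theorem fad_zeta_radius {X : Type*} (f : X → X)
    (hfin : ∀ n : ℕ, 1 ≤ n → (Function.fixedPoints (f^[n])).Finite)
    {k : ℕ} (A : Matrix (Fin k) (Fin k) ℤ) (S : Finset ℕ) (c : ℝ)
    (r : ℕ → ℝ) (s t : ℕ → ℕ → ℝ)
    (hFAD : IsFADWith (fixCount f) A S c r s t) :
    (∀ z : ℂ, ‖z‖ < (expEntropy A c)⁻¹ →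
      Summable fun n : ℕ =>
        ‖zetaCoeff (fun m => (fixCount f m : ℂ)) n‖ * ‖z‖ ^ n) ∧
    (∀ z : ℂ, (expEntropy A c)⁻¹ < ‖z‖ →
      ¬ Summable fun n : ℕ =>
        ‖zetaCoeff (fun m => (fixCount f m : ℂ)) n‖ * ‖z‖ ^ n) :=
  fad_zeta_radius_general f A S c r s t hFAD
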